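/- Let k be an algebraically closed field of characteristic zero. There exists a Lie algebra morphism from ym(3) to sl(2, k) whose image is solvable but not nilpotent; explicitly, the assignment x₁ ↦ h, x₂ ↦ e, x₃ ↦ i·h (where i² = −1, e = E₁₂ and h = E₁₁ − E₂₂) kills the Yang–Mills relations r₁, r₂, r₃ and its image, the span of e and h, is a solvable Lie subalgebra of sl(2, k) that is not nilpotent. -/

import Mathlib

open FreeLieAlgebra LieAlgebra LieAlgebra.SpecialLinear

/-- The Yang–Mills relation `r j = ∑ i [xᵢ,[xᵢ,xⱼ]]` in the free Lie algebra on three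
generators over `k`. -/
noncomputable def ymRel3 (k : Type*) [Field k] (j : Fin 3) : FreeLieAlgebra k (Fin 3) :=
  ∑ i : Fin 3, ⁅of k i, ⁅of k i, of k j⁆⁆

/-- The standard nilpotent element `e = E₁₂` of `sl(2,k)`. -/
noncomputable def Esl (k : Type*) [Field k] : sl (Fin 2) k := single (0 : Fin 2) 1 (by decide) (1 : k)

/-- The standard semisimple element `h = E₁₁ − E₂₂` of `sl(2,k)`. -/
noncomputable def Hsl (k : Type*) [Field k] : sl (Fin 2) k :=
  ⟨Matrix.single 0 0 1 - Matrix.single 1 1 1, by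
    show _ ∈ LinearMap.ker (Matrix.traceLinearMap (Fin 2) k k)
    simp [Matrix.trace_single_eq_same]⟩

/-!
The generators go to `h`, `e` and `i • h`. Since `⁅h, e⁆ = 2 • e`, the span of `e` and `h` is a
Lie subalgebra whose derived algebra lies in the line `k ∙ e`, so it is solvable; but `ad h` has
the nonzero eigenvalue `2` on `e`, so it is not nilpotent. The Yang–Mills relations vanish
because `ad e` kills `⁅e, h⁆ ∈ k ∙ e` and `(ad (i • h))² = i² (ad h)² = -(ad h)²`.
-/

section SpanPair

variable {K L : Type*} [Field K] [LieRing L] [LieAlgebra K L]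

theorem lie_mem_span_singleton_of_mem_span_pair {e h : L} {c : K} (hhe : ⁅h, e⁆ = c • e)
    {x y : L} (hx : x ∈ Submodule.span K {e, h}) (hy : y ∈ Submodule.span K {e, h}) :
    ⁅x, y⁆ ∈ K ∙ e := by
  obtain ⟨a, b, rfl⟩ := Submodule.mem_span_pair.mp hx
  obtain ⟨a', b', rfl⟩ := Submodule.mem_span_pair.mp hy
  have heh : ⁅e, h⁆ = (-c) • e := by rw [← lie_skew, hhe, neg_smul]
  simp only [add_lie, lie_add, smul_lie, lie_smul, lie_self, hhe, heh, smul_zero, zero_add,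
    add_zero, smul_smul, ← add_smul]
  exact Submodule.smul_mem _ _ (Submodule.mem_span_singleton_self e)

theorem LieAlgebra.isSolvable_of_forall_lie_mem_span_singleton (e : L)
    (he : ∀ x y : L, ⁅x, y⁆ ∈ K ∙ e) : IsSolvable L := by
  have hD1 : (derivedSeries K L 1 : Submodule K L) ≤ K ∙ e := by
    rw [coe_derivedSeries_one_eq, Submodule.span_le]
    rintro _ ⟨x, y, rfl⟩
    exact he x y
  refine IsSolvable.mk (R := K) (k := 2)
    ((LieSubmodule.lie_eq_bot_iff _ _).mpr fun x hx y hy => ?_)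
  obtain ⟨a, rfl⟩ := Submodule.mem_span_singleton.mp (hD1 hx)
  obtain ⟨b, rfl⟩ := Submodule.mem_span_singleton.mp (hD1 hy)
  simp

theorem LieAlgebra.not_isNilpotent_of_lie_eq_smul {x y : L} {c : K} (hxy : ⁅x, y⁆ = c • y)
    (hc : c ≠ 0) (hy : y ≠ 0) : ¬ LieRing.IsNilpotent L := by
  intro hL
  have hc' : IsNilpotent c :=
    (Module.End.hasEigenvalue_of_hasEigenvector ⟨Module.End.mem_eigenspace_iff.mpr hxy, hy⟩
      ).isNilpotent_of_isNilpotent (LieModule.isNilpotent_toEnd_of_isNilpotent K L L x)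
  exact hc hc'.eq_zero

namespace LieSubalgebra

variable {e h : L} {c : K}

def spanPair (hhe : ⁅h, e⁆ = c • e) : LieSubalgebra K L where
  toSubmodule := Submodule.span K {e, h}
  lie_mem' hx hy := Submodule.span_mono (by simp)
    (lie_mem_span_singleton_of_mem_span_pair hhe hx hy)

variable (hhe : ⁅h, e⁆ = c • e)

theorem left_mem_spanPair : e ∈ spanPair hhe := Submodule.subset_span (by simp)

theorem right_mem_spanPair : h ∈ spanPair hhe := Submodule.subset_span (by simp)

instance isSolvable_spanPair : IsSolvable (spanPair hhe) := by
  refine isSolvable_of_forall_lie_mem_span_singleton (K := K) ⟨e, left_mem_spanPair hhe⟩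
    fun x y => ?_
  obtain ⟨a, ha⟩ := Submodule.mem_span_singleton.mp
    (lie_mem_span_singleton_of_mem_span_pair hhe x.2 y.2)
  exact Submodule.mem_span_singleton.mpr ⟨a, Subtype.ext ha⟩

theorem not_isNilpotent_spanPair (hc : c ≠ 0) (he : e ≠ 0) :
    ¬ LieRing.IsNilpotent (spanPair hhe) :=
  not_isNilpotent_of_lie_eq_smul (x := ⟨h, right_mem_spanPair hhe⟩)
    (y := ⟨e, left_mem_spanPair hhe⟩) (Subtype.ext hhe) hc
    fun he0 => he (congrArg Subtype.val he0)

end LieSubalgebra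

end SpanPair

theorem FreeLieAlgebra.range_lift_le {R X L : Type*} [CommRing R] [LieRing L] [LieAlgebra R L]
    {f : X → L} {S : LieSubalgebra R L} (hf : ∀ x, f x ∈ S) : (lift R f).range ≤ S := by
  have hfactor : lift R f = S.incl.comp (lift R fun x => ⟨f x, hf x⟩) :=
    hom_ext fun x => by simp
  rw [hfactor]
  rintro _ ⟨y, rfl⟩
  exact (lift R (fun x => (⟨f x, hf x⟩ : S)) y).2

section YangMills

variable {k L : Type*} [Field k] [LieRing L] [LieAlgebra k L] {e h : L} {c : k}

theorem lift_ymRel3_eq_zero (hhe : ⁅h, e⁆ = c • e) {i : k} (hi : i ^ 2 = -1) (j : Fin 3) :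
    lift k ![h, e, i • h] (ymRel3 k j) = 0 := by
  have hehe : ⁅e, ⁅e, h⁆⁆ = 0 := by rw [← lie_skew e h, hhe]; simp
  rw [ymRel3, map_sum, Fin.sum_univ_three]
  fin_cases j <;> simp [hehe]
  -- what is left of `r₂` is `(1 + i²) • ⁅h, ⁅h, e⁆⁆`
  rw [smul_smul, ← sq, hi, neg_one_smul, add_neg_cancel]

theorem range_lift_eq_spanPair (hhe : ⁅h, e⁆ = c • e) (i : k) :
    (lift k ![h, e, i • h]).range = LieSubalgebra.spanPair hhe := by
  have he := LieSubalgebra.left_mem_spanPair hhe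
  have hh := LieSubalgebra.right_mem_spanPair hhe
  refine le_antisymm (range_lift_le fun x => ?_) ?_
  · fin_cases x
    exacts [hh, he, LieSubalgebra.smul_mem _ i hh]
  · rw [← LieSubalgebra.toSubmodule_le_toSubmodule]
    refine Submodule.span_le.mpr (Set.insert_subset ⟨of k 1, ?_⟩ (Set.singleton_subset_iff.mpr
      ⟨of k 0, ?_⟩)) <;> simp

end YangMills

section SL2

variable (k : Type*) [Field k]

theorem lie_Hsl_Esl : ⁅Hsl k, Esl k⁆ = (2 : k) • Esl k := by
  ext a b
  fin_cases a <;> fin_cases b <;>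
    norm_num [Hsl, Esl, Ring.lie_def, Matrix.mul_apply, Matrix.single]

theorem Esl_ne_zero : Esl k ≠ 0 := by
  intro h
  simpa [Esl, Matrix.single] using congrArg (fun x => x.val 0 1) h

end SL2

theorem ym3_to_sl2_solvable_not_nilpotent_general (k : Type*) [Field k] [CharZero k]
    (i : k) (hi : i ^ 2 = -1) :
    ∃ φ : FreeLieAlgebra k (Fin 3) →ₗ⁅k⁆ sl (Fin 2) k,
      φ (of k 0) = Hsl k ∧ φ (of k 1) = Esl k ∧ φ (of k 2) = i • Hsl k ∧
      (∀ j : Fin 3, φ (ymRel3 k j) = 0) ∧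
      φ.range.toSubmodule = Submodule.span k {Esl k, Hsl k} ∧
      LieAlgebra.IsSolvable φ.range ∧
      ¬ LieRing.IsNilpotent φ.range := by
  refine ⟨lift k ![Hsl k, Esl k, i • Hsl k], lift_of_apply .., lift_of_apply ..,
    lift_of_apply .., lift_ymRel3_eq_zero (lie_Hsl_Esl k) hi, ?_, ?_, ?_⟩ <;>
    rw [range_lift_eq_spanPair (lie_Hsl_Esl k)]
  · rfl
  · infer_instance
  · exact LieSubalgebra.not_isNilpotent_spanPair _ two_ne_zero (Esl_ne_zero k)

/-- There is a Lie algebra morphism `ym(3) → sl(2,k)` whose image is solvable but not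
nilpotent: the assignment `x₁ ↦ h`, `x₂ ↦ e`, `x₃ ↦ i·h` (where `i² = −1`) kills the
Yang–Mills relations, and its image, the span of `e` and `h`, is a solvable Lie subalgebra
of `sl(2,k)` which is not nilpotent. -/
theorem ym3_to_sl2_solvable_not_nilpotent (k : Type*) [Field k] [IsAlgClosed k] [CharZero k]
    (i : k) (hi : i ^ 2 = -1) :
    ∃ φ : FreeLieAlgebra k (Fin 3) →ₗ⁅k⁆ sl (Fin 2) k,
      φ (of k 0) = Hsl k ∧ φ (of k 1) = Esl k ∧ φ (of k 2) = i • Hsl k ∧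
      (∀ j : Fin 3, φ (ymRel3 k j) = 0) ∧
      φ.range.toSubmodule = Submodule.span k {Esl k, Hsl k} ∧
      LieAlgebra.IsSolvable φ.range ∧
      ¬ LieRing.IsNilpotent φ.range :=
  ym3_to_sl2_solvable_not_nilpotent_general k i hi
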